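/- arXiv:1911.07751 — 8 statements merged into one kernel-verified Lean document; each statement's English description precedes it below -/
import Mathlib

section
/- Let N be a group, Γ a subgroup of N, and A : N ≃* N a group automorphism with A(Γ) ⊆ Γ. For j ∈ ℕ let Γ^j be the image in N of the j-th term of the lower central series of Γ, let A⁻¹(Γ^j) = {g ∈ N : A(g) ∈ Γ^j}, and let A*Γ^j denote the set product A⁻¹(Γ^j) · Γ = {x * γ : x ∈ A⁻¹(Γ^j), γ ∈ Γ}. Then A*Γ^{j+1} is normalized by A*Γ^j: for every g ∈ A*Γ^j and every h ∈ A*Γ^{j+1} one has g * h * g⁻¹ ∈ A*Γ^{j+1}. -/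
open Pointwise

/-- The `j`-th term of the lower central series of the subgroup `Γ`, viewed as a
subgroup of the ambient group `N`: `Γ^0 = Γ` and `Γ^{j+1} = ⁅Γ, Γ^j⁆`. -/
def gammaSeries {N : Type*} [Group N] (Γ : Subgroup N) : ℕ → Subgroup N
  | 0 => Γ
  | j + 1 => ⁅Γ, gammaSeries Γ j⁆

lemma gammaSeries_le {N : Type*} [Group N] (Γ : Subgroup N) : ∀ j, gammaSeries Γ j ≤ Γ
  | 0 => le_rfl
  | j + 1 => Subgroup.commutator_le.mpr fun a ha b hb => by
      have hb' := gammaSeries_le Γ j hb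
      rw [commutatorElement_def]
      exact mul_mem (mul_mem (mul_mem ha hb') (inv_mem ha)) (inv_mem hb')

lemma gammaSeries_conj {N : Type*} [Group N] (Γ : Subgroup N) {γ : N} (hγ : γ ∈ Γ) :
    ∀ j, ∀ z ∈ gammaSeries Γ j, γ * z * γ⁻¹ ∈ gammaSeries Γ j := by
  intro j
  induction j with
  | zero => intro z hz; exact mul_mem (mul_mem hγ hz) (inv_mem hγ)
  | succ j ih =>
    intro z hz
    have : Subgroup.map (MulAut.conj γ).toMonoidHom (gammaSeries Γ (j + 1)) ≤
        gammaSeries Γ (j + 1) := by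
      show Subgroup.map _ ⁅Γ, gammaSeries Γ j⁆ ≤ ⁅Γ, gammaSeries Γ j⁆
      rw [Subgroup.map_commutator]
      apply Subgroup.commutator_mono
      · rintro _ ⟨a, ha, rfl⟩
        exact mul_mem (mul_mem hγ ha) (inv_mem hγ)
      · rintro _ ⟨a, ha, rfl⟩
        exact ih a ha
    exact this ⟨z, hz, rfl⟩

open scoped commutatorElement

/-- `A*Γ^{j+1} = A⁻¹(Γ^{j+1})·Γ` is normalized by `A*Γ^j = A⁻¹(Γ^j)·Γ`. -/
theorem preimage_lowerCentral_mul_normalized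
    {N : Type*} [Group N] (Γ : Subgroup N) (A : N ≃* N)
    (hA : ∀ γ ∈ Γ, A γ ∈ Γ) (j : ℕ) :
    ∀ g ∈ ((Subgroup.comap (A : N →* N) (gammaSeries Γ j) : Set N) * (Γ : Set N)),
      ∀ h ∈ ((Subgroup.comap (A : N →* N) (gammaSeries Γ (j + 1)) : Set N) * (Γ : Set N)),
        g * h * g⁻¹ ∈
          ((Subgroup.comap (A : N →* N) (gammaSeries Γ (j + 1)) : Set N) * (Γ : Set N)) := by
  rintro g hg h hh
  rw [Set.mem_mul] at hg hh ⊢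
  obtain ⟨x, hx, γ, hγ, rfl⟩ := hg
  obtain ⟨y, hy, δ, hδ, rfl⟩ := hh
  replace hx := Subgroup.mem_comap.mp hx
  replace hy := Subgroup.mem_comap.mp hy
  have hAγ := hA γ hγ
  refine ⟨x * (γ * y * γ⁻¹) * x⁻¹ * ⁅x, γ * δ * γ⁻¹⁆, ?_, γ * δ * γ⁻¹,
    mul_mem (mul_mem hγ hδ) (inv_mem hγ), ?_⟩
  · have h1 : A (γ * y * γ⁻¹) ∈ gammaSeries Γ (j + 1) := by
      simpa using gammaSeries_conj Γ hAγ (j + 1) _ hy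
    have hAxΓ : A x ∈ Γ := gammaSeries_le Γ j hx
    have h2 : A (x * (γ * y * γ⁻¹) * x⁻¹) ∈ gammaSeries Γ (j + 1) := by
      simpa using gammaSeries_conj Γ hAxΓ (j + 1) _ h1
    have hδ' : A (γ * δ * γ⁻¹) ∈ Γ := by
      simpa using mul_mem (mul_mem hAγ (hA δ hδ)) (inv_mem hAγ)
    have h3 : A ⁅x, γ * δ * γ⁻¹⁆ ∈ gammaSeries Γ (j + 1) := by
      have : ⁅A x, A (γ * δ * γ⁻¹)⁆ ∈ (⁅Γ, gammaSeries Γ j⁆ : Subgroup N) := by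
        rw [← commutatorElement_inv]
        exact inv_mem (Subgroup.commutator_mem_commutator hδ' hx)
      simpa [commutatorElement_def, gammaSeries] using this
    simpa using mul_mem h2 h3
  · simp only [commutatorElement_def]
    group
end

section
/- Let a ∈ ℝ, let d > 1 be real, and let α : ℝ → ℝ be a bounded function. Define β : ℝ → ℝ by β(y) = ∑_{i=0}^∞ d^{−(i+1)} α(aⁱ y), and define maps f, L, h : ℝ² → ℝ² by f(x,y) = (d·x + α(y), a·y), L(x,y) = (d·x, a·y), and h(x,y) = (x + β(y), y). Then h ∘ f = L ∘ h, i.e., h conjugates the skew-product map f to the linear map L. -/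
/-- The map `h(x,y) = (x + β(y), y)` conjugates the skew product
`f(x,y) = (d·x + α(y), a·y)` to the linear map `L(x,y) = (d·x, a·y)`,
where `β(y) = ∑_{i≥0} d^{-(i+1)} α(aⁱ y)`. -/
theorem skew_product_conjugacy
    (a d : ℝ) (hd : 1 < d) (α : ℝ → ℝ) (A : ℝ) (hα : ∀ x, |α x| ≤ A)
    (β : ℝ → ℝ) (hβ : β = fun y => ∑' i : ℕ, α (a ^ i * y) / d ^ (i + 1))
    (f L h : ℝ × ℝ → ℝ × ℝ)
    (hf : f = fun p => (d * p.1 + α p.2, a * p.2))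
    (hL : L = fun p => (d * p.1, a * p.2))
    (hh : h = fun p => (p.1 + β p.2, p.2)) :
    h ∘ f = L ∘ h := by
  have hd0 : (0:ℝ) < d := lt_trans one_pos hd
  have hgeo : Summable (fun i : ℕ => (A / d) * (1 / d) ^ i) := by
    apply Summable.mul_left
    apply summable_geometric_of_lt_one (by positivity)
    rw [div_lt_one hd0]; exact hd
  have hsum : ∀ y, Summable (fun i : ℕ => α (a ^ i * y) / d ^ (i + 1)) := by
    intro y
    apply Summable.of_norm
    apply Summable.of_nonneg_of_le (fun i => norm_nonneg _) _ hgeo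
    intro i
    have hp : (0:ℝ) < d ^ (i + 1) := by positivity
    have : ‖α (a ^ i * y) / d ^ (i + 1)‖ = |α (a ^ i * y)| / d ^ (i + 1) := by
      rw [norm_div, Real.norm_eq_abs, Real.norm_eq_abs, abs_of_pos hp]
    rw [this]
    have h1 : (A / d) * (1 / d) ^ i = A / d ^ (i + 1) := by
      rw [one_div, inv_pow, ← one_div, div_mul_div_comm, mul_one, ← pow_succ']
    rw [h1]
    exact div_le_div_of_nonneg_right (hα _) hp.le
  -- key functional equation
  have key : ∀ y, d * β y = α y + β (a * y) := by
    intro y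
    rw [hβ]
    simp only
    rw [← tsum_mul_left]
    have heq : (fun i : ℕ => d * (α (a ^ i * y) / d ^ (i + 1)))
        = fun i : ℕ => α (a ^ i * y) / d ^ i := by
      funext i
      rw [pow_succ]
      field_simp
    rw [heq]
    have hsum' : Summable (fun i : ℕ => α (a ^ i * y) / d ^ i) := by
      have := (hsum y).mul_left d
      simpa [heq] using this
    rw [Summable.tsum_eq_zero_add hsum']
    simp only [pow_zero, div_one, one_mul]
    congr 1
    apply tsum_congr
    intro i
    congr 2
    rw [pow_succ]; ring
  subst hf hL hh
  funext p
  simp only [Function.comp_apply]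
  have := key p.2
  apply Prod.ext <;> simp only
  · linarith [mul_add d p.1 (β p.2)]
end

section
/- Let a > 1 be real, let 0 < θ < δ ≤ 1, and set d = a^θ. Let α : ℝ → ℝ be bounded and δ-Hölder with constant C, and define β(y) = ∑_{i=0}^∞ d^{−(i+1)} α(aⁱ y). Then β is θ-Hölder: there exists a constant C' such that |β(x) − β(y)| ≤ C' |x − y|^θ for all x, y ∈ ℝ. -/
set_option maxHeartbeats 1000000 in
/-- Case II: if `d = a^θ` with `0 < θ < δ ≤ 1` and `α` is bounded and δ-Hölder, then
`β(y) = ∑_{i≥0} d^{-(i+1)} α(aⁱ y)` is θ-Hölder. -/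
theorem holder_of_series_case_II
    (a d θ δ : ℝ) (ha : 1 < a) (hθ0 : 0 < θ) (hθδ : θ < δ) (hδ1 : δ ≤ 1)
    (hd : d = a ^ θ)
    (α : ℝ → ℝ) (A : ℝ) (hbound : ∀ x, |α x| ≤ A)
    (C : ℝ) (hholder : ∀ x y, |α x - α y| ≤ C * |x - y| ^ δ)
    (β : ℝ → ℝ) (hβ : β = fun y => ∑' i : ℕ, α (a ^ i * y) / d ^ (i + 1)) :
    ∃ C' : ℝ, ∀ x y : ℝ, |β x - β y| ≤ C' * |x - y| ^ θ := by
  subst hβ hd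
  have ha0 : (0:ℝ) < a := lt_trans one_pos ha
  set p := a ^ θ with hp
  set q := a ^ (δ - θ) with hq
  have hp1 : 1 < p := (Real.one_lt_rpow_iff_of_pos ha0).mpr (Or.inl ⟨ha, hθ0⟩)
  have hp0 : (0:ℝ) < p := lt_trans one_pos hp1
  have hq1 : 1 < q := (Real.one_lt_rpow_iff_of_pos ha0).mpr (Or.inl ⟨ha, by linarith⟩)
  have hA0 : (0:ℝ) ≤ A := le_trans (abs_nonneg _) (hbound 0)
  have hC0 : (0:ℝ) ≤ C := by
    have h := hholder 1 0
    simp [Real.one_rpow] at h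
    linarith [abs_nonneg (α 1 - α 0)]
  -- summability of the defining series
  have hsum : ∀ x : ℝ, Summable (fun i : ℕ => α (a ^ i * x) / p ^ (i + 1)) := by
    intro x
    have hgeo : Summable (fun i : ℕ => (A / p) * (p⁻¹) ^ i) :=
      (summable_geometric_of_lt_one (by positivity) (inv_lt_one_of_one_lt₀ hp1)).mul_left _
    refine Summable.of_norm (Summable.of_nonneg_of_le (fun i => norm_nonneg _) (fun i => ?_) hgeo)
    have hpow : (0:ℝ) < p ^ (i+1) := pow_pos hp0 _
    rw [Real.norm_eq_abs, abs_div, abs_of_pos hpow]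
    calc |α (a ^ i * x)| / p ^ (i+1) ≤ A / p ^ (i+1) := by gcongr; exact hbound _
      _ = A / p * p⁻¹ ^ i := by rw [pow_succ, mul_comm, ← div_div, div_eq_mul_inv (A/p), inv_pow]
  refine ⟨C * q / (p * (q - 1)) + 2 * A / (p - 1), fun x y => ?_⟩
  set K1 := C * q / (p * (q - 1)) with hK1
  set K2 := 2 * A / (p - 1) with hK2
  have hK1n : 0 ≤ K1 :=
    div_nonneg (mul_nonneg hC0 (by positivity)) (mul_nonneg hp0.le (by linarith))
  have hK2n : 0 ≤ K2 := div_nonneg (by linarith) (by linarith)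
  set t := |x - y| with ht
  have ht0 : 0 ≤ t := abs_nonneg _
  -- the termwise difference function
  set h : ℕ → ℝ := fun i => (α (a ^ i * x) - α (a ^ i * y)) / p ^ (i + 1) with hh
  have hhsum : Summable h := by
    refine ((hsum x).sub (hsum y)).congr fun i => ?_
    simp only [hh]; rw [sub_div]
  have hEq : (∑' i : ℕ, α (a ^ i * x) / p ^ (i+1)) - (∑' i : ℕ, α (a ^ i * y) / p ^ (i+1))
      = ∑' i : ℕ, h i := by
    rw [← Summable.tsum_sub (hsum x) (hsum y)]
    exact tsum_congr fun i => (sub_div _ _ _).symm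
  -- per-term bounds
  have hb1 : ∀ i : ℕ, |h i| ≤ 2 * A / p ^ (i + 1) := by
    intro i
    have hpow : (0:ℝ) < p ^ (i+1) := pow_pos hp0 _
    rw [hh, abs_div, abs_of_pos hpow]
    gcongr
    calc |α (a ^ i * x) - α (a ^ i * y)| ≤ |α (a ^ i * x)| + |α (a ^ i * y)| := abs_sub _ _
      _ ≤ 2 * A := by linarith [hbound (a ^ i * x), hbound (a ^ i * y)]
  have hb2 : ∀ i : ℕ, |h i| ≤ (C * t ^ δ / p) * q ^ i := by
    intro i
    have hpow : (0:ℝ) < p ^ (i+1) := pow_pos hp0 _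
    have hai : (0:ℝ) < a ^ i := pow_pos ha0 _
    have habs : |a ^ i * x - a ^ i * y| = a ^ i * t := by
      rw [← mul_sub, abs_mul, abs_of_pos hai, ht]
    have hrw : (a ^ i * t) ^ δ = (a ^ δ) ^ i * t ^ δ := by
      rw [Real.mul_rpow hai.le ht0]
      congr 1
      rw [← Real.rpow_natCast a i, ← Real.rpow_mul ha0.le, mul_comm,
        Real.rpow_mul ha0.le, Real.rpow_natCast]
    have key : C * (a ^ i * t) ^ δ / p ^ (i+1) = (C * t ^ δ / p) * q ^ i := by
      rw [hrw, pow_succ, mul_comm (p ^ i) p, hq, Real.rpow_sub ha0, ← hp, div_pow]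
      field_simp
    calc |h i| ≤ C * |a ^ i * x - a ^ i * y| ^ δ / p ^ (i+1) := by
          rw [hh, abs_div, abs_of_pos hpow]; gcongr ?_ / _; exact hholder _ _
      _ = (C * t ^ δ / p) * q ^ i := by rw [habs, key]
  -- geometric helper
  have hdiv : ∀ (c : ℝ) (i : ℕ), c / p ^ (i + 1) = c / p * p⁻¹ ^ i := fun c i => by
    rw [pow_succ, mul_comm, ← div_div, div_eq_mul_inv (c / p), inv_pow]
  have hSk : Summable (fun i : ℕ => 2 * A / p ^ (i + 1)) := by
    refine ((summable_geometric_of_lt_one (by positivity)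
      (inv_lt_one_of_one_lt₀ hp1)).mul_left (2 * A / p)).congr fun i => (hdiv _ i).symm
  have habs_sum : Summable (fun i : ℕ => |h i|) :=
    Summable.of_nonneg_of_le (fun i => abs_nonneg _) hb1 hSk
  -- tail sum computation
  have htailsum : ∀ N : ℕ, ∑' i : ℕ, 2 * A / p ^ ((i + N) + 1) = 2 * A / (p ^ N * (p - 1)) := by
    intro N
    have h1 : ∀ i : ℕ, 2 * A / p ^ ((i + N) + 1) = (2 * A / p ^ (N + 1)) * p⁻¹ ^ i := by
      intro i
      rw [show (i + N) + 1 = (N + 1) + i by omega, pow_add, ← div_div,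
        div_eq_mul_inv (2 * A / p ^ (N+1)), inv_pow]
    rw [tsum_congr h1, tsum_mul_left,
      tsum_geometric_of_lt_one (by positivity) (inv_lt_one_of_one_lt₀ hp1)]
    have hpne : p ≠ 0 := hp0.ne'
    have hp1ne : p - 1 ≠ 0 := by intro hc; linarith [hp1]
    rw [pow_succ]
    field_simp
  -- main split bound
  have main : ∀ N : ℕ, |∑' i : ℕ, h i| ≤
      (C * t ^ δ / p) * ((q ^ N - 1) / (q - 1)) + 2 * A / (p ^ N * (p - 1)) := by
    intro N
    rw [← Summable.sum_add_tsum_nat_add N hhsum]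
    have hsum1 : Summable fun i : ℕ => |h (i + N)| := (summable_nat_add_iff N).mpr habs_sum
    have hsum2 : Summable fun i : ℕ => 2 * A / p ^ ((i + N) + 1) :=
      (summable_nat_add_iff N).mpr hSk
    calc |(∑ i ∈ Finset.range N, h i) + ∑' i : ℕ, h (i + N)|
        ≤ |∑ i ∈ Finset.range N, h i| + |∑' i : ℕ, h (i + N)| := abs_add_le _ _
      _ ≤ (∑ i ∈ Finset.range N, |h i|) + ∑' i : ℕ, |h (i + N)| := by
          refine add_le_add (Finset.abs_sum_le_sum_abs _ _) ?_
          simpa [Real.norm_eq_abs] using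
            norm_tsum_le_tsum_norm (f := fun i : ℕ => h (i + N))
              (by simpa [Real.norm_eq_abs] using hsum1)
      _ ≤ (∑ i ∈ Finset.range N, (C * t ^ δ / p) * q ^ i)
            + ∑' i : ℕ, 2 * A / p ^ ((i + N) + 1) :=
          add_le_add (Finset.sum_le_sum fun i _ => hb2 i)
            (Summable.tsum_le_tsum (fun i => hb1 (i + N)) hsum1 hsum2)
      _ = (C * t ^ δ / p) * ((q ^ N - 1) / (q - 1)) + 2 * A / (p ^ N * (p - 1)) := by
          rw [← Finset.mul_sum, geom_sum_eq (ne_of_gt hq1), htailsum N]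
  rw [hEq]
  -- rpow/pow commutation helper
  have hcomm : ∀ (c : ℝ) (n : ℕ), (a ^ c) ^ n = ((a : ℝ) ^ n) ^ c := by
    intro c n
    rw [← Real.rpow_natCast (a ^ c) n, ← Real.rpow_mul ha0.le, mul_comm,
      Real.rpow_mul ha0.le, Real.rpow_natCast]
  rcases eq_or_lt_of_le ht0 with h0 | htpos
  · -- t = 0
    have hxy : x = y := sub_eq_zero.mp (abs_eq_zero.mp h0.symm)
    have ht' : t = 0 := h0.symm
    rw [ht', Real.zero_rpow hθ0.ne', mul_zero]
    have hz : ∀ i : ℕ, h i = 0 := fun i => by rw [hh]; simp [hxy]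
    simp [tsum_congr hz]
  · rcases le_or_gt 1 t with h1 | h1
    · -- 1 ≤ t : use N = 0
      have hm := main 0
      simp only [pow_zero, sub_self, zero_div, mul_zero, zero_add, one_mul] at hm
      have htθ : 1 ≤ t ^ θ := Real.one_le_rpow h1 hθ0.le
      refine hm.trans ?_
      rw [hK2] at hK2n ⊢
      nlinarith
    · -- t < 1 : choose the cutoff N
      obtain ⟨n, hn⟩ := pow_unbounded_of_one_lt (1 / t) ha
      have hex : ∃ m : ℕ, 1 ≤ a ^ m * t := ⟨n, by
        rw [← div_le_iff₀ htpos] at *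
        exact le_of_lt (by simpa using hn)⟩
      classical
      set N := Nat.find hex with hNdef
      have hN1 : 1 ≤ a ^ N * t := Nat.find_spec hex
      have hNpos : N ≠ 0 := by
        intro hc
        rw [hc, pow_zero, one_mul] at hN1
        linarith
      have hNpred : ¬ (1 ≤ a ^ (N - 1) * t) := Nat.find_min hex (Nat.pred_lt hNpos)
      have hN2 : a ^ N * t ≤ a := by
        have hNe : a ^ N = a * a ^ (N - 1) := by
          conv_lhs => rw [← Nat.succ_pred_eq_of_pos (Nat.pos_of_ne_zero hNpos)]
          rw [pow_succ, mul_comm, Nat.pred_eq_sub_one]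
        rw [hNe, mul_assoc]
        nlinarith [lt_of_not_ge hNpred]
      have hqN : q ^ N = ((a : ℝ) ^ N) ^ (δ - θ) := hcomm _ _
      have hpN : p ^ N = ((a : ℝ) ^ N) ^ θ := hcomm _ _
      have haN : (0:ℝ) < a ^ N := pow_pos ha0 N
      -- head estimate
      have hhead : t ^ δ * q ^ N ≤ q * t ^ θ := by
        have e1 : t ^ δ = t ^ θ * t ^ (δ - θ) := by
          rw [← Real.rpow_add htpos]; ring_nf
        rw [e1, hqN, mul_assoc]
        have e2 : t ^ (δ - θ) * ((a:ℝ) ^ N) ^ (δ - θ) = (a ^ N * t) ^ (δ - θ) := by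
          rw [← Real.mul_rpow ht0 haN.le, mul_comm t ((a:ℝ) ^ N)]
        rw [e2]
        have e3 : (a ^ N * t) ^ (δ - θ) ≤ a ^ (δ - θ) :=
          Real.rpow_le_rpow (by positivity) hN2 (by linarith)
        have e4 : (0:ℝ) ≤ t ^ θ := Real.rpow_nonneg ht0 θ
        rw [hq, mul_comm (a ^ (δ - θ)) (t ^ θ)]
        exact mul_le_mul_of_nonneg_left e3 e4
      -- tail estimate
      have htl2 : 1 / p ^ N ≤ t ^ θ := by
        have hinv : ((a:ℝ) ^ N)⁻¹ ≤ t := by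
          rw [inv_le_iff_one_le_mul₀ haN]
          linarith [hN1]
        rw [hpN, one_div, ← Real.inv_rpow haN.le]
        exact Real.rpow_le_rpow (by positivity) hinv hθ0.le
      refine (main N).trans ?_
      have hqs : (0:ℝ) < q - 1 := by linarith
      have hps : (0:ℝ) < p - 1 := by linarith
      have hpne : p ≠ 0 := hp0.ne'
      have hqne : q - 1 ≠ 0 := hqs.ne'
      have hhd : (C * t ^ δ / p) * ((q ^ N - 1) / (q - 1)) ≤ K1 * t ^ θ := by
        have e1 : (C * t ^ δ / p) * ((q ^ N - 1) / (q - 1))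
            = C * (t ^ δ * (q ^ N - 1)) / (p * (q - 1)) := by
          field_simp
        have e2 : K1 * t ^ θ = C * (q * t ^ θ) / (p * (q - 1)) := by
          rw [hK1]
          field_simp
        rw [e1, e2]
        have e3 : t ^ δ * (q ^ N - 1) ≤ q * t ^ θ := by
          nlinarith [Real.rpow_nonneg ht0 δ, hhead]
        gcongr
      have htl : 2 * A / (p ^ N * (p - 1)) ≤ K2 * t ^ θ := by
        have e1 : 2 * A / (p ^ N * (p - 1)) = K2 * (1 / p ^ N) := by
          rw [hK2, div_mul_div_comm, mul_one, mul_comm (p - 1) (p ^ N)]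
        rw [e1]
        exact mul_le_mul_of_nonneg_left htl2 hK2n
      linarith
end

section
/- Let a > 1 be real, let θ ∈ (0,1], and set d = a^θ. Let α : ℝ → ℝ be bounded by A (i.e. |α| ≤ A) and θ-Hölder with constant C, and define β(y) = ∑_{i=0}^∞ d^{−(i+1)} α(aⁱ y). Then β has modulus of continuity t^θ(1 + |log t|): there exists a constant K such that for all x, y ∈ ℝ with 0 < |x − y| ≤ 1/a, |β(x) − β(y)| ≤ K |x − y|^θ (1 + |log |x − y||). -/
set_option maxHeartbeats 1000000

/-- Case IV: if `d = a^θ` and `α` is bounded by `A` and θ-Hölder with constant `C`, then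
`β(y) = ∑_{i≥0} d^{-(i+1)} α(aⁱ y)` has modulus of continuity `t^θ (1 + |log t|)`. -/
theorem log_holder_modulus_of_series_case_IV
    (a d θ : ℝ) (ha : 1 < a) (hθ0 : 0 < θ) (hθ1 : θ ≤ 1)
    (hd : d = a ^ θ)
    (α : ℝ → ℝ) (A : ℝ) (hbound : ∀ x, |α x| ≤ A)
    (C : ℝ) (hholder : ∀ x y, |α x - α y| ≤ C * |x - y| ^ θ)
    (β : ℝ → ℝ) (hβ : β = fun y => ∑' i : ℕ, α (a ^ i * y) / d ^ (i + 1)) :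
    ∃ K : ℝ, ∀ x y : ℝ, 0 < |x - y| → |x - y| ≤ 1 / a →
      |β x - β y| ≤ K * |x - y| ^ θ * (1 + |Real.log (|x - y|)|) := by
  have ha0 : (0:ℝ) < a := lt_trans one_pos ha
  have hloga : 0 < Real.log a := Real.log_pos ha
  have hd1 : 1 < d := by
    rw [hd]; exact (Real.one_lt_rpow_iff_of_pos ha0).2 (Or.inl ⟨ha, hθ0⟩)
  have hd0 : (0:ℝ) < d := lt_trans one_pos hd1
  have hdne : d ≠ 0 := hd0.ne'
  have hA : 0 ≤ A := (abs_nonneg _).trans (hbound 0)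
  have hC : 0 ≤ C := by
    have h := hholder 1 0
    rw [sub_zero, abs_one, Real.one_rpow, mul_one] at h
    exact (abs_nonneg _).trans h
  have hr0 : (0:ℝ) ≤ 1/d := by positivity
  have hr1 : (1:ℝ)/d < 1 := by rw [div_lt_one hd0]; exact hd1
  -- key power identity : (a^i)^θ = d^i
  have key : ∀ i : ℕ, ((a:ℝ)^i) ^ θ = d ^ i := by
    intro i
    rw [← Real.rpow_natCast a i, ← Real.rpow_mul ha0.le, mul_comm,
      Real.rpow_mul ha0.le, Real.rpow_natCast, hd]
  -- summability
  have hsum : ∀ z : ℝ, Summable (fun i : ℕ => α (a ^ i * z) / d ^ (i + 1)) := by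
    intro z
    apply Summable.of_norm_bounded (g := fun i => (A/d) * (1/d)^i)
      (((summable_geometric_of_lt_one hr0 hr1).mul_left _))
    intro i
    rw [Real.norm_eq_abs, abs_div, abs_of_pos (pow_pos hd0 _)]
    calc |α (a ^ i * z)| / d^(i+1) ≤ A / d^(i+1) := by gcongr; exact hbound _
      _ = (A/d) * (1/d)^i := by
          rw [one_div, inv_pow, pow_succ]
          field_simp
  refine ⟨(1 + 1/Real.log a) * (C/d) + 2*A/(d-1), fun x y ht0 hta => ?_⟩
  set t := |x - y| with htdef
  have ht1 : t < 1 := lt_of_le_of_lt hta (by rw [div_lt_one ha0]; exact ha)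
  set L := |Real.log t| with hLdef
  have hL0 : 0 ≤ L := abs_nonneg _
  have hLlog : Real.log (1/t) = L := by
    rw [one_div, Real.log_inv]
    exact (abs_of_neg (Real.log_neg ht0 ht1)).symm
  set N := ⌊Real.log (1/t) / Real.log a⌋₊ with hNdef
  -- the summand
  set f : ℕ → ℝ := fun i => (α (a^i*x) - α (a^i*y)) / d^(i+1) with hfdef
  have hsf : Summable f := by
    simpa [hfdef, sub_div] using (hsum x).sub (hsum y)
  have hsfa : Summable (fun i => |f i|) := hsf.abs
  have hβd : β x - β y = ∑' i : ℕ, f i := by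
    rw [hβ]; simp only [hfdef]
    rw [← Summable.tsum_sub (hsum x) (hsum y)]
    congr 1; funext i; rw [sub_div]
  -- headwise bound
  have hhead : ∀ i : ℕ, |f i| ≤ C * t ^ θ / d := by
    intro i
    have hpow : (0:ℝ) < a ^ i := pow_pos ha0 i
    have hdi : (0:ℝ) < d ^ i := pow_pos hd0 i
    rw [hfdef]; simp only
    rw [abs_div, abs_of_pos (pow_pos hd0 _)]
    have h1 : |α (a^i*x) - α (a^i*y)| ≤ C * (d^i * t ^ θ) := by
      have h := hholder (a^i*x) (a^i*y)
      rw [← mul_sub, abs_mul, abs_of_pos hpow, ← htdef,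
        Real.mul_rpow hpow.le (abs_nonneg _), key i] at h
      exact h
    calc |α (a^i*x) - α (a^i*y)| / d^(i+1) ≤ C * (d^i * t^θ) / d^(i+1) := by gcongr
      _ = C * t^θ / d := by rw [pow_succ]; field_simp
  -- tailwise bound
  have hterm : ∀ i : ℕ, |f (i+(N+1))| ≤ (2*A/d^(N+2)) * (1/d)^i := by
    intro i
    rw [hfdef]; simp only
    rw [abs_div, abs_of_pos (pow_pos hd0 _)]
    have h2A : |α (a^(i+(N+1))*x) - α (a^(i+(N+1))*y)| ≤ 2*A := by
      calc |α (a^(i+(N+1))*x) - α (a^(i+(N+1))*y)| ≤ |α (a^(i+(N+1))*x)| + |α (a^(i+(N+1))*y)| :=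
            abs_sub _ _
        _ ≤ A + A := add_le_add (hbound _) (hbound _)
        _ = 2*A := by ring
    calc |α (a^(i+(N+1))*x) - α (a^(i+(N+1))*y)| / d^(i+(N+1)+1)
        ≤ 2*A / d^(i+(N+1)+1) := by gcongr
      _ = (2*A/d^(N+2)) * (1/d)^i := by
          rw [show i+(N+1)+1 = N+2+i by ring, pow_add, one_div, inv_pow]
          field_simp
  have hgeo : Summable (fun i : ℕ => (2*A/d^(N+2)) * (1/d)^i) :=
    (summable_geometric_of_lt_one hr0 hr1).mul_left _
  -- key power inequality : 1/d^(N+1) ≤ t^θ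
  have hinv : 1/d^(N+1) ≤ t^θ := by
    have h1t : 1/t < a ^ ((N:ℝ)+1) := by
      rw [Real.lt_rpow_iff_log_lt (by positivity) ha0]
      have hlt := Nat.lt_floor_add_one (Real.log (1/t) / Real.log a)
      rw [← hNdef] at hlt
      have h := (div_lt_iff₀ hloga).1 hlt
      linarith
    have h2 : (1/t)^θ ≤ (a ^ ((N:ℝ)+1))^θ :=
      Real.rpow_le_rpow (by positivity) h1t.le hθ0.le
    have h3 : (a ^ ((N:ℝ)+1))^θ = d^(N+1) := by
      rw [← Real.rpow_mul ha0.le, mul_comm, Real.rpow_mul ha0.le, hd,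
        show ((N:ℝ)+1) = ((N+1 : ℕ):ℝ) by push_cast; ring, Real.rpow_natCast]
    have h4 : (t^θ)⁻¹ ≤ d^(N+1) := by
      have e : (1/t)^θ = (t^θ)⁻¹ := by rw [one_div, Real.inv_rpow ht0.le]
      rw [e, h3] at h2
      exact h2
    rw [one_div]
    exact ((inv_le_comm₀ (pow_pos hd0 _) (Real.rpow_pos_of_pos ht0 θ)).2 h4)
  -- floor bound
  have hN : (N:ℝ) ≤ L / Real.log a := by
    have h := Nat.floor_le (show 0 ≤ Real.log (1/t)/Real.log a from
      div_nonneg (Real.log_nonneg (by rw [le_div_iff₀ ht0]; linarith)) hloga.le)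
    exact h.trans_eq (by rw [hLlog])
  have hNfin : ((N:ℝ)+1) ≤ (1 + 1/Real.log a)*(1+L) := by
    have h3 : L/Real.log a = L * (1/Real.log a) := by rw [mul_one_div]
    have h4 : (0:ℝ) ≤ 1/Real.log a := by positivity
    rw [h3] at hN
    nlinarith
  -- assemble
  have habs : |∑' i, f i| ≤ ∑' i, |f i| := by
    simpa [Real.norm_eq_abs] using
      norm_tsum_le_tsum_norm (f := f) (by simpa [Real.norm_eq_abs] using hsfa)
  have hsplit : ∑' i, |f i| = (∑ i ∈ Finset.range (N+1), |f i|) + ∑' i, |f (i+(N+1))| :=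
    (Summable.sum_add_tsum_nat_add (N+1) hsfa).symm
  have hheadsum : ∑ i ∈ Finset.range (N+1), |f i| ≤ ((N:ℝ)+1) * (C*t^θ/d) := by
    calc ∑ i ∈ Finset.range (N+1), |f i| ≤ ∑ _i ∈ Finset.range (N+1), (C*t^θ/d) :=
          Finset.sum_le_sum (fun i _ => hhead i)
      _ = ((N:ℝ)+1)*(C*t^θ/d) := by
          rw [Finset.sum_const, Finset.card_range, nsmul_eq_mul]; push_cast; ring
  have htail : ∑' i, |f (i+(N+1))| ≤ 2*A/(d-1) * t^θ := by
    have hd1' : (1:ℝ) - 1/d ≠ 0 := by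
      have : (1:ℝ)/d < 1 := hr1
      linarith
    calc ∑' i, |f (i+(N+1))| ≤ ∑' i : ℕ, (2*A/d^(N+2))*(1/d)^i :=
          Summable.tsum_le_tsum hterm ((summable_nat_add_iff (N+1)).2 hsfa) hgeo
      _ = (2*A/d^(N+2)) * (1-1/d)⁻¹ := by
          rw [tsum_mul_left, tsum_geometric_of_lt_one hr0 hr1]
      _ = 2*A/(d-1) * (1/d^(N+1)) := by
          have e1 : (1:ℝ) - 1/d = (d-1)/d := by field_simp
          have hdm1 : d - 1 ≠ 0 := by linarith
          have hdN : (d:ℝ)^(N+1) ≠ 0 := pow_ne_zero _ hdne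
          rw [e1, inv_div, pow_succ]
          field_simp
      _ ≤ 2*A/(d-1) * t^θ :=
          mul_le_mul_of_nonneg_left hinv (div_nonneg (by linarith) (by linarith))
  have htθ : 0 ≤ t ^ θ := (Real.rpow_pos_of_pos ht0 θ).le
  calc |β x - β y| = |∑' i, f i| := by rw [hβd]
    _ ≤ ∑' i, |f i| := habs
    _ = (∑ i ∈ Finset.range (N+1), |f i|) + ∑' i, |f (i+(N+1))| := hsplit
    _ ≤ ((N:ℝ)+1) * (C*t^θ/d) + 2*A/(d-1) * t^θ := add_le_add hheadsum htail
    _ ≤ ((1 + 1/Real.log a)*(1+L)) * (C*t^θ/d) + (2*A/(d-1) * t^θ) * (1+L) := by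
        have h1 : ((N:ℝ)+1) * (C*t^θ/d) ≤ ((1 + 1/Real.log a)*(1+L)) * (C*t^θ/d) := by
          apply mul_le_mul_of_nonneg_right hNfin (by positivity)
        have h2 : 2*A/(d-1) * t^θ ≤ (2*A/(d-1) * t^θ) * (1+L) := by
          apply le_mul_of_one_le_right
            (mul_nonneg (div_nonneg (by linarith) (by linarith)) htθ)
          linarith
        linarith
    _ = ((1 + 1/Real.log a) * (C/d) + 2*A/(d-1)) * t ^ θ * (1 + L) := by ring
end

section
/- Let a > 1 be real, let θ ∈ (0,1], and set d = a^θ. Let α : ℝ → ℝ be bounded by A (i.e. |α| ≤ A), with α(0) = 0, and suppose there exist ε₀ > 0 and K > 0 such that α(x) ≥ K x^θ for all x ∈ (0, ε₀). Define β(y) = ∑_{i=0}^∞ d^{−(i+1)} α(aⁱ y). Then β fails to be θ-Hölder at 0: for every C > 0 and every δ > 0 there exists x ∈ (0, δ) with |β(x) − β(0)| > C x^θ. -/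
/-- If `d = a^θ`, `α` is bounded, `α(0) = 0` and `α(x) ≥ K x^θ` near `0⁺`, then
`β(y) = ∑_{i≥0} d^{-(i+1)} α(aⁱ y)` fails to be θ-Hölder at `0`. -/
theorem not_holder_at_zero_of_series
    (a d θ : ℝ) (ha : 1 < a) (hθ0 : 0 < θ) (hθ1 : θ ≤ 1)
    (hd : d = a ^ θ)
    (α : ℝ → ℝ) (A : ℝ) (hbound : ∀ x, |α x| ≤ A) (hα0 : α 0 = 0)
    (ε₀ K : ℝ) (hε₀ : 0 < ε₀) (hK : 0 < K)
    (hlow : ∀ x : ℝ, 0 < x → x < ε₀ → K * x ^ θ ≤ α x)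
    (β : ℝ → ℝ) (hβ : β = fun y => ∑' i : ℕ, α (a ^ i * y) / d ^ (i + 1)) :
    ∀ C > (0 : ℝ), ∀ δ > (0 : ℝ), ∃ x : ℝ, 0 < x ∧ x < δ ∧ C * x ^ θ < |β x - β 0| := by
  intro C hC δ hδ
  have ha0 : (0:ℝ) < a := by linarith
  have hd1 : 1 < d := by
    rw [hd]
    exact Real.one_lt_rpow_iff_of_pos ha0 |>.mpr (Or.inl ⟨ha, hθ0⟩)
  have hd0 : (0:ℝ) < d := by linarith
  have hA : 0 ≤ A := le_trans (abs_nonneg _) (hbound 0)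
  have hpow : ∀ i : ℕ, ((a:ℝ) ^ i) ^ θ = d ^ i := by
    intro i
    rw [hd, ← Real.rpow_natCast a i, ← Real.rpow_natCast (a ^ θ) i,
      ← Real.rpow_mul ha0.le, ← Real.rpow_mul ha0.le, mul_comm]
  have hinv : (1:ℝ)/d < 1 := by rw [div_lt_one hd0]; exact hd1
  have hsum : ∀ y : ℝ, Summable (fun i : ℕ => α (a ^ i * y) / d ^ (i + 1)) := by
    intro y
    apply Summable.of_abs
    apply Summable.of_nonneg_of_le (fun i => abs_nonneg _) (fun i => ?_)
      ((summable_geometric_of_lt_one (by positivity) hinv).mul_left A)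
    rw [abs_div, abs_of_pos (pow_pos hd0 _), one_div, inv_pow, ← div_eq_mul_inv]
    gcongr
    · exact hbound _
    · exact hd1.le
    · exact Nat.le_succ i
  have hβ0 : β 0 = 0 := by simp [hβ, hα0]
  set M : ℝ := A / (ε₀ ^ θ * (d - 1)) with hM
  have hM0 : 0 ≤ M := by
    apply div_nonneg hA
    have : (0:ℝ) < ε₀ ^ θ := Real.rpow_pos_of_pos hε₀ θ
    nlinarith
  obtain ⟨N₁, hN₁⟩ := exists_nat_gt ((C + M) * d / K)
  obtain ⟨N₂, hN₂⟩ := pow_unbounded_of_one_lt (ε₀ / δ) ha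
  set N := max N₁ N₂ with hN
  set x : ℝ := ε₀ / a ^ N with hxdef
  have haN : (0:ℝ) < a ^ N := pow_pos ha0 N
  have hx0 : 0 < x := div_pos hε₀ haN
  have hxδ : x < δ := by
    have h1 : ε₀ / δ < a ^ N₂ := hN₂
    have h2 : (a:ℝ) ^ N₂ ≤ a ^ N := pow_le_pow_right₀ ha.le (le_max_right _ _)
    rw [hxdef, div_lt_iff₀ haN]
    have : ε₀ < a ^ N₂ * δ := by rw [div_lt_iff₀ hδ] at h1; linarith
    nlinarith
  refine ⟨x, hx0, hxδ, ?_⟩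
  have hxθ : x ^ θ = ε₀ ^ θ / d ^ N := by
    rw [hxdef, Real.div_rpow hε₀.le haN.le, hpow N]
  have hxθ0 : 0 < x ^ θ := Real.rpow_pos_of_pos hx0 θ
  have hdN : (0:ℝ) < d ^ N := pow_pos hd0 N
  set f : ℕ → ℝ := fun i => α (a ^ i * x) / d ^ (i + 1) with hf
  -- split tsum
  have hsplit : ∑ i ∈ Finset.range N, f i + ∑' i : ℕ, f (i + N) = ∑' i, f i :=
    Summable.sum_add_tsum_nat_add N (hsum x)
  -- finite part
  have hfin : (N : ℝ) * (K * x ^ θ / d) ≤ ∑ i ∈ Finset.range N, f i := by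
    have hterm : ∀ i ∈ Finset.range N, K * x ^ θ / d ≤ f i := by
      intro i hi
      rw [Finset.mem_range] at hi
      have hai : (0:ℝ) < a ^ i := pow_pos ha0 i
      have h1 : 0 < a ^ i * x := mul_pos hai hx0
      have h2 : a ^ i * x < ε₀ := by
        rw [hxdef, mul_div_assoc']
        rw [div_lt_iff₀ haN]
        have : (a:ℝ) ^ i < a ^ N := pow_lt_pow_right₀ ha hi
        nlinarith
      have h3 := hlow _ h1 h2
      have h4 : (a ^ i * x) ^ θ = d ^ i * x ^ θ := by
        rw [Real.mul_rpow hai.le hx0.le, hpow i]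
      have h5 : K * (d ^ i * x ^ θ) / d ^ (i + 1) = K * x ^ θ / d := by
        rw [pow_succ]
        field_simp
      calc K * x ^ θ / d = K * (d ^ i * x ^ θ) / d ^ (i + 1) := h5.symm
        _ ≤ α (a ^ i * x) / d ^ (i + 1) := by
            rw [h4] at h3
            gcongr
        _ = f i := rfl
    calc (N : ℝ) * (K * x ^ θ / d) = ∑ _i ∈ Finset.range N, K * x ^ θ / d := by
          rw [Finset.sum_const, Finset.card_range, nsmul_eq_mul]
      _ ≤ ∑ i ∈ Finset.range N, f i := Finset.sum_le_sum hterm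
  -- tail part
  have htail : -(A / (d ^ N * (d - 1))) ≤ ∑' i : ℕ, f (i + N) := by
    have hs1 : Summable (fun i : ℕ => f (i + N)) := (summable_nat_add_iff N).mpr (hsum x)
    have hs2 : Summable (fun i : ℕ => A / d ^ (N + 1) * (1 / d) ^ i) :=
      (summable_geometric_of_lt_one (by positivity) hinv).mul_left _
    have hle : ∀ i : ℕ, -(f (i + N)) ≤ A / d ^ (N + 1) * (1 / d) ^ i := by
      intro i
      have h1 : |f (i + N)| ≤ A / d ^ (i + N + 1) := by
        rw [hf]
        simp only
        rw [abs_div, abs_of_pos (pow_pos hd0 _)]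
        gcongr
        exact hbound _
      have h2 : A / d ^ (i + N + 1) = A / d ^ (N + 1) * (1 / d) ^ i := by
        rw [one_div, inv_pow, ← div_eq_mul_inv, div_div, ← pow_add]
        ring_nf
      calc -(f (i + N)) ≤ |f (i + N)| := neg_le_abs _
        _ ≤ A / d ^ (i + N + 1) := h1
        _ = _ := h2
    have := Summable.tsum_le_tsum hle hs1.neg hs2
    rw [tsum_neg] at this
    have hval : ∑' i : ℕ, A / d ^ (N + 1) * (1 / d) ^ i = A / (d ^ N * (d - 1)) := by
      rw [tsum_mul_left, tsum_geometric_of_lt_one (by positivity) hinv]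
      rw [pow_succ]
      have hd1' : d - 1 ≠ 0 := by linarith
      field_simp
    rw [hval] at this
    linarith
  have hβx : (N : ℝ) * (K * x ^ θ / d) - A / (d ^ N * (d - 1)) ≤ β x := by
    rw [hβ]
    simp only
    rw [← hsplit]
    have := add_le_add hfin htail
    simpa using this
  -- numeric comparison
  have hMx : M * x ^ θ = A / (d ^ N * (d - 1)) := by
    rw [hM, hxθ]
    have he : (0:ℝ) < ε₀ ^ θ := Real.rpow_pos_of_pos hε₀ θ
    have hd1' : d - 1 ≠ 0 := by linarith
    field_simp
  have hkey : C + M < (N : ℝ) * K / d := by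
    have h1 : (C + M) * d / K < (N₁ : ℝ) := hN₁
    have h2 : (N₁ : ℝ) ≤ (N : ℝ) := Nat.cast_le.mpr (le_max_left _ _)
    rw [div_lt_iff₀ hK] at h1
    rw [lt_div_iff₀ hd0]
    have h3 : (N₁ : ℝ) * K ≤ (N : ℝ) * K := mul_le_mul_of_nonneg_right h2 hK.le
    linarith
  have hfinal : C * x ^ θ < β x := by
    have h1 : C * x ^ θ < ((N:ℝ) * K / d - M) * x ^ θ := by
      apply mul_lt_mul_of_pos_right _ hxθ0
      linarith
    have h2 : ((N:ℝ) * K / d - M) * x ^ θ = (N : ℝ) * (K * x ^ θ / d) - A / (d ^ N * (d - 1)) := by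
      rw [sub_mul, hMx]; ring
    linarith [hβx]
  rw [hβ0, sub_zero]
  calc C * x ^ θ < β x := hfinal
    _ ≤ |β x| := le_abs_self _
end

section
/- Let E be a finite-dimensional real normed vector space and let V be a set of continuously differentiable (C¹) functions ψ : E → ℝ. For x ∈ E define E_V(x) = ⋂_{ψ ∈ V} ker(Dψ(x)), the intersection of the kernels of the Fréchet derivatives at x, and let k(x) = dim E_V(x). Then k is upper semicontinuous: for every x ∈ E there is a neighborhood U of x such that k(y) ≤ k(x) for all y ∈ U. -/
open Module

-- finite subfamily achieving the infimum, via Artinian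
lemma exists_finset_biInf_eq {ι : Type*} {E : Type*} [AddCommGroup E] [Module ℝ E]
    [FiniteDimensional ℝ E] (s : Set ι) (f : ι → Submodule ℝ E) :
    ∃ F : Finset ι, ↑F ⊆ s ∧ (⨅ i ∈ F, f i) = ⨅ i ∈ s, f i := by
  classical
  set A : Set (Submodule ℝ E) :=
    {p | ∃ F : Finset ι, ↑F ⊆ s ∧ p = ⨅ i ∈ F, f i}
  obtain ⟨p, ⟨F, hFs, rfl⟩, hmin⟩ :=
    IsArtinian.set_has_minimal A ⟨⊤, ∅, by simp, by simp⟩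
  refine ⟨F, hFs, le_antisymm (le_iInf₂ fun i hi => ?_) (le_iInf₂ fun i hi => iInf₂_le i (hFs hi))⟩
  by_contra hle
  have h1 : (⨅ j ∈ insert i F, f j) ∈ A := ⟨insert i F, by simp [Set.insert_subset_iff, hi, hFs], rfl⟩
  have h2 : (⨅ j ∈ insert i F, f j) < ⨅ j ∈ F, f j := by
    rw [Finset.iInf_insert]
    exact lt_of_le_of_ne inf_le_right (fun h => hle (h ▸ inf_le_left))
  exact hmin _ h1 h2

/-- Upper semicontinuity of the dimension of the common kernel distribution
`E_V(x) = ⋂_{ψ ∈ V} ker Dψ(x)` for a family `V` of `C¹` functions on a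
finite-dimensional real normed space. -/
theorem dim_common_kernel_upper_semicontinuous
    {E : Type*} [NormedAddCommGroup E] [NormedSpace ℝ E] [FiniteDimensional ℝ E]
    (V : Set (E → ℝ)) (hV : ∀ ψ ∈ V, ContDiff ℝ 1 ψ) :
    ∀ x : E, ∃ U ∈ nhds x, ∀ y ∈ U,
      Module.finrank ℝ ↥(⨅ ψ ∈ V, LinearMap.ker (fderiv ℝ ψ y : E →ₗ[ℝ] ℝ)) ≤
        Module.finrank ℝ ↥(⨅ ψ ∈ V, LinearMap.ker (fderiv ℝ ψ x : E →ₗ[ℝ] ℝ)) := by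
  classical
  intro x
  obtain ⟨F, hFV, hFeq⟩ := exists_finset_biInf_eq V
    (fun ψ => LinearMap.ker (fderiv ℝ ψ x : E →ₗ[ℝ] ℝ))
  -- the combined derivative map at a point
  set M : E → (E →L[ℝ] (F → ℝ)) :=
    fun y => ContinuousLinearMap.pi (fun ψ : F => fderiv ℝ (ψ : E → ℝ) y) with hM
  have hkerM : ∀ y, LinearMap.ker (M y : E →ₗ[ℝ] (F → ℝ)) = ⨅ ψ ∈ F, LinearMap.ker (fderiv ℝ ψ y : E →ₗ[ℝ] ℝ) := by
    intro y
    ext w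
    simp [hM, Submodule.mem_iInf, LinearMap.mem_ker, funext_iff,
      ContinuousLinearMap.pi_apply, Subtype.forall]
  -- complement W of ker (M x)
  obtain ⟨W, hW⟩ := Submodule.exists_isCompl (LinearMap.ker (M x : E →ₗ[ℝ] (F → ℝ)))
  -- antilipschitz constant on W
  obtain ⟨K, hK0, hKanti⟩ := LinearMap.exists_antilipschitzWith
    (LinearMap.comp (↑(M x) : E →ₗ[ℝ] (F → ℝ)) W.subtype) (by
      rw [LinearMap.ker_comp, Submodule.eq_bot_iff]
      intro w hw
      rw [Submodule.mem_comap] at hw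
      have hmem : (w : E) ∈ LinearMap.ker (M x : E →ₗ[ℝ] (F → ℝ)) ⊓ W := ⟨hw, w.2⟩
      rw [hW.disjoint.eq_bot] at hmem
      exact Subtype.ext hmem)
  -- antilipschitz inequality in norm form
  have hanti : ∀ w : E, w ∈ W → ‖w‖ ≤ K * ‖M x w‖ := by
    intro w hw
    have := hKanti.le_mul_dist ⟨w, hw⟩ 0
    simpa [dist_eq_norm] using this
  set ε : ℝ := (2 * K)⁻¹ with hε
  have hεpos : 0 < ε := by positivity
  -- neighborhood where all derivatives are ε-close
  have hev : ∀ᶠ y in nhds x, ∀ ψ ∈ F, ‖fderiv ℝ ψ y - fderiv ℝ ψ x‖ ≤ ε := by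
    rw [Filter.eventually_all_finset]
    intro ψ hψ
    have hc : Continuous (fun y => fderiv ℝ ψ y) :=
      (hV ψ (hFV hψ)).continuous_fderiv one_ne_zero
    have hball := hc.tendsto x (Metric.closedBall_mem_nhds (fderiv ℝ ψ x) hεpos)
    filter_upwards [hball] with y hy
    simpa [Metric.mem_closedBall, dist_eq_norm] using hy
  refine ⟨_, hev, fun y hy => ?_⟩
  -- norm bound on M y - M x
  have hMbound : ‖M y - M x‖ ≤ ε := by
    have heq : M y - M x =
        ContinuousLinearMap.pi (fun ψ : F => fderiv ℝ (ψ : E → ℝ) y - fderiv ℝ (ψ : E → ℝ) x) := by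
      ext w ψ
      simp [hM]
    rw [heq]
    exact ContinuousLinearMap.norm_pi_le_of_le (fun ψ => hy ψ ψ.2) hεpos.le
  -- the common kernel at y is disjoint from W
  have hdisj : Disjoint (⨅ ψ ∈ V, LinearMap.ker (fderiv ℝ ψ y : E →ₗ[ℝ] ℝ)) W := by
    rw [Submodule.disjoint_def]
    intro w hwV hwW
    have hMyw : M y w = 0 := by
      funext ψ
      have : w ∈ LinearMap.ker (fderiv ℝ (ψ : E → ℝ) y : E →ₗ[ℝ] ℝ) := by
        have := hwV
        simp only [Submodule.mem_iInf] at this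
        exact this ψ (hFV ψ.2)
      simpa [hM] using this
    have h1 : ‖M x w‖ ≤ ε * ‖w‖ := by
      have : M x w = (M x - M y) w := by simp [hMyw]
      rw [this]
      calc ‖(M x - M y) w‖ ≤ ‖M x - M y‖ * ‖w‖ := (M x - M y).le_opNorm w
        _ ≤ ε * ‖w‖ := by
            have : ‖M x - M y‖ ≤ ε := by rwa [norm_sub_rev]
            exact mul_le_mul_of_nonneg_right this (norm_nonneg w)
    have h2 : ‖w‖ ≤ K * (ε * ‖w‖) :=
      (hanti w hwW).trans (mul_le_mul_of_nonneg_left h1 K.coe_nonneg)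
    have hKε : (K : ℝ) * ε ≤ 1 / 2 := by
      rw [hε]
      have hKpos : (0:ℝ) < K := hK0
      rw [mul_inv_le_iff₀ (by positivity)]
      nlinarith
    have : ‖w‖ ≤ 0 := by nlinarith [norm_nonneg w]
    exact norm_le_zero_iff.mp this
  -- dimension count
  have hcount := Submodule.finrank_add_finrank_le_of_disjoint hdisj
  have hcompl := Submodule.finrank_add_eq_of_isCompl hW
  have hkx : Module.finrank ℝ ↥(LinearMap.ker (M x : E →ₗ[ℝ] (F → ℝ))) =
      Module.finrank ℝ ↥(⨅ ψ ∈ V, LinearMap.ker (fderiv ℝ ψ x : E →ₗ[ℝ] ℝ)) := by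
    rw [hkerM, hFeq]
  omega
end

section
/- Let d ≥ 1 and let A : ℝ^d → ℝ^d be a linear map such that A(ℤ^d) ⊆ ℤ^d (A maps integer vectors to integer vectors) and such that there is a constant c > 1 with ‖A v‖ ≥ c ‖v‖ for all v ∈ ℝ^d. Then for every x₀ ∈ ℝ^d the set of iterated preimages of x₀ modulo ℤ^d, namely ⋃_{n ≥ 1} {x ∈ ℝ^d : Aⁿ x − x₀ ∈ ℤ^d}, is dense in ℝ^d. -/
/-- For an expanding integer-preserving linear map `A` of `ℝ^d`, the iterated preimages
of any point `x₀` modulo `ℤ^d` are dense in `ℝ^d`. -/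
theorem dense_iterated_preimages_mod_lattice
    (d : ℕ) (hd : 1 ≤ d)
    (A : EuclideanSpace ℝ (Fin d) →ₗ[ℝ] EuclideanSpace ℝ (Fin d))
    (hint : ∀ v : EuclideanSpace ℝ (Fin d),
      (∀ i, ∃ m : ℤ, v i = (m : ℝ)) → (∀ i, ∃ m : ℤ, A v i = (m : ℝ)))
    (c : ℝ) (hc : 1 < c) (hexp : ∀ v : EuclideanSpace ℝ (Fin d), c * ‖v‖ ≤ ‖A v‖) :
    ∀ x₀ : EuclideanSpace ℝ (Fin d),
      Dense {x : EuclideanSpace ℝ (Fin d) |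
        ∃ n : ℕ, 1 ≤ n ∧ ∀ i, ∃ m : ℤ, ((A ^ n) x - x₀) i = (m : ℝ)} := by
  intro x₀
  have hc0 : (0:ℝ) < c := lt_trans one_pos hc
  have hbound : ∀ (n : ℕ) (v : EuclideanSpace ℝ (Fin d)), c ^ n * ‖v‖ ≤ ‖(A ^ n) v‖ := by
    intro n
    induction n with
    | zero => intro v; simp
    | succ n ih =>
      intro v
      calc c ^ (n+1) * ‖v‖ = c ^ n * (c * ‖v‖) := by ring
        _ ≤ c ^ n * ‖A v‖ :=
            mul_le_mul_of_nonneg_left (hexp v) (by positivity)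
        _ ≤ ‖(A ^ n) (A v)‖ := ih (A v)
        _ = ‖(A ^ (n+1)) v‖ := by rw [pow_succ]; rfl
  have hsurj : ∀ n : ℕ, Function.Surjective (A ^ n) := by
    intro n
    rw [← LinearMap.injective_iff_surjective]
    intro v w h
    have h0 : (A ^ n) (v - w) = 0 := by simp [map_sub, h]
    have hb := hbound n (v - w)
    rw [h0, norm_zero] at hb
    have hcn : (0:ℝ) < c ^ n := pow_pos hc0 n
    have hnz : ‖v - w‖ = 0 := by nlinarith [norm_nonneg (v - w)]
    exact sub_eq_zero.mp (norm_eq_zero.mp hnz)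
  rw [Metric.dense_iff]
  intro y ε hε
  obtain ⟨k, hk⟩ := pow_unbounded_of_one_lt (Real.sqrt d / (2 * ε)) hc
  set n := k + 1 with hn
  have hcn : Real.sqrt d / (2 * ε) < c ^ n :=
    lt_of_lt_of_le hk (pow_le_pow_right₀ hc.le (Nat.le_succ k))
  set z : EuclideanSpace ℝ (Fin d) := (A ^ n) y - x₀ with hz
  set w : EuclideanSpace ℝ (Fin d) := WithLp.toLp 2 (fun i => (round (z i) : ℝ)) with hw
  obtain ⟨x, hx⟩ := hsurj n (x₀ + w)
  have hxx : (A ^ n) x - x₀ = w := by rw [hx]; abel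
  -- norm estimate on w - z
  have hwz : ‖w - z‖ ≤ Real.sqrt d / 2 := by
    have h1 : ‖w - z‖ = Real.sqrt (∑ i, ‖(w - z) i‖ ^ 2) := EuclideanSpace.norm_eq _
    have h2 : ∀ i, ‖(w - z) i‖ ^ 2 ≤ (1/2 : ℝ) ^ 2 := by
      intro i
      have : (w - z) i = (round (z i) : ℝ) - z i := rfl
      have habs : |(round (z i) : ℝ) - z i| ≤ 1 / 2 := by
        rw [abs_sub_comm]; exact abs_sub_round (z i)
      rw [this, Real.norm_eq_abs]
      calc |(round (z i) : ℝ) - z i| ^ 2 = |(round (z i) : ℝ) - z i| * |(round (z i) : ℝ) - z i| := sq _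
        _ ≤ (1/2) * (1/2) := mul_le_mul habs habs (abs_nonneg _) (by norm_num)
        _ = (1/2 : ℝ)^2 := (sq _).symm
    have h3 : (∑ i, ‖(w - z) i‖ ^ 2) ≤ (d : ℝ) * (1/2)^2 := by
      calc (∑ i : Fin d, ‖(w - z) i‖ ^ 2) ≤ ∑ i : Fin d, (1/2 : ℝ)^2 :=
            Finset.sum_le_sum (fun i _ => h2 i)
        _ = (d : ℝ) * (1/2)^2 := by simp [Finset.sum_const]
    have h4 : Real.sqrt (∑ i, ‖(w - z) i‖ ^ 2) ≤ Real.sqrt ((d:ℝ) * (1/2)^2) :=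
      Real.sqrt_le_sqrt h3
    have h5 : Real.sqrt ((d:ℝ) * (1/2)^2) = Real.sqrt d / 2 := by
      rw [Real.sqrt_mul (Nat.cast_nonneg d), Real.sqrt_sq (by norm_num : (0:ℝ) ≤ 1/2)]
      ring
    rw [h1]; rw [h5] at h4; exact h4
  have hdist : dist x y < ε := by
    rw [dist_eq_norm]
    have hsub : (A ^ n) (x - y) = w - z := by
      rw [map_sub, hx, hz]; abel
    have hb := hbound n (x - y)
    rw [hsub] at hb
    have hcnp : (0:ℝ) < c ^ n := pow_pos hc0 n
    have hsd : (0:ℝ) ≤ Real.sqrt d := Real.sqrt_nonneg _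
    -- from hcn : √d/(2ε) < c^n, get √d/2 < ε * c^n
    have h6 : Real.sqrt d / 2 < ε * c ^ n := by
      rw [div_lt_iff₀ (by positivity : (0:ℝ) < 2*ε)] at hcn
      nlinarith
    have h7 : c ^ n * ‖x - y‖ < ε * c ^ n := lt_of_le_of_lt (hb.trans hwz) h6
    nlinarith [norm_nonneg (x - y)]
  refine ⟨x, Metric.mem_ball.mpr hdist, n, Nat.le_add_left 1 k, fun i => ⟨round (z i), ?_⟩⟩
  rw [hxx]
end

section
/- If Γ is a finitely generated nilpotent group, then Γ has only countably many subgroups; that is, the type of subgroups of Γ is countable. -/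
open Subgroup
open scoped commutatorElement

section Aux

variable {G : Type*} [Group G]

private lemma myfg_sup {H K : Subgroup G} (hH : H.FG) (hK : K.FG) : (H ⊔ K).FG := by
  classical
  obtain ⟨S, hS⟩ := hH; obtain ⟨T, hT⟩ := hK
  exact ⟨S ∪ T, by rw [Finset.coe_union, Subgroup.closure_union, hS, hT]⟩

private lemma myfg_map {H : Subgroup G} {Q : Type*} [Group Q] (f : G →* Q) (hH : H.FG) :
    (H.map f).FG := by
  classical
  obtain ⟨S, hS⟩ := hH
  exact ⟨S.image f, by rw [Finset.coe_image, ← MonoidHom.map_closure, hS]⟩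

/-- Key commutator computation: if `K` is normal, generated by `A` modulo `⁅K, ⊤⁆`, and
`⁅⁅K,⊤⁆,⊤⁆ ≤ M`, then `⁅K, ⊤⁆` is generated by commutators of `A` with generators of `G`,
modulo `M`. -/
private lemma key_commutator_le (S A : Set G)
    (hS : Subgroup.closure S = ⊤) (K M : Subgroup G) [hKn : K.Normal]
    (hML : M ≤ ⁅K, (⊤ : Subgroup G)⁆)
    (hLM : ⁅⁅K, (⊤ : Subgroup G)⁆, (⊤ : Subgroup G)⁆ ≤ M)
    (hA : A ⊆ (K : Set G))
    (hKA : Subgroup.closure A ⊔ ⁅K, (⊤ : Subgroup G)⁆ = K) :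
    ⁅K, (⊤ : Subgroup G)⁆ ≤
      Subgroup.closure {x | ∃ a ∈ A, ∃ s ∈ S, ⁅a, s⁆ = x} ⊔ M := by
  set L := ⁅K, (⊤ : Subgroup G)⁆ with hL
  set B := Subgroup.closure {x | ∃ a ∈ A, ∃ s ∈ S, ⁅a, s⁆ = x} with hB
  set C := B ⊔ M with hC
  have hBL : B ≤ L := by
    rw [hB]
    refine (Subgroup.closure_le _).mpr ?_
    rintro x ⟨a, ha, s, hs, rfl⟩
    exact Subgroup.commutator_mem_commutator (hA ha) (Subgroup.mem_top s)
  have hCL : C ≤ L := sup_le hBL hML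
  have hconj : ∀ (x c : G), c ∈ C → x * c * x⁻¹ ∈ C := by
    intro x c hc
    have h1 : ⁅c⁻¹, x⁆ ∈ M :=
      hLM (Subgroup.commutator_mem_commutator (hCL (C.inv_mem hc)) (Subgroup.mem_top x))
    have h2 : x * c * x⁻¹ = c * ⁅c⁻¹, x⁆ := by
      simp only [commutatorElement_def]; group
    rw [h2]
    exact C.mul_mem hc ((le_sup_right : M ≤ C) h1)
  have step1 : ∀ s ∈ S, ∀ x ∈ K, ⁅x, s⁆ ∈ C := by
    intro s hs
    let T : Subgroup G :=
      { carrier := {x | x ∈ K ∧ ⁅x, s⁆ ∈ C}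
        one_mem' := by
          refine ⟨K.one_mem, ?_⟩
          have e : ⁅(1 : G), s⁆ = 1 := by simp only [commutatorElement_def]; group
          rw [e]; exact C.one_mem
        mul_mem' := by
          rintro x y ⟨hxK, hxC⟩ ⟨hyK, hyC⟩
          refine ⟨K.mul_mem hxK hyK, ?_⟩
          have e : ⁅x * y, s⁆ = (x * ⁅y, s⁆ * x⁻¹) * ⁅x, s⁆ := by
            simp only [commutatorElement_def]; group
          rw [e]
          exact C.mul_mem (hconj x _ hyC) hxC
        inv_mem' := by
          rintro x ⟨hxK, hxC⟩
          refine ⟨K.inv_mem hxK, ?_⟩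
          have e : ⁅x⁻¹, s⁆ = x⁻¹ * ⁅x, s⁆⁻¹ * x⁻¹⁻¹ := by
            simp only [commutatorElement_def]; group
          rw [e]
          exact hconj x⁻¹ _ (C.inv_mem hxC) }
    have hKT : K ≤ T := by
      rw [← hKA]
      refine sup_le ?_ ?_
      · refine (Subgroup.closure_le _).mpr ?_
        intro a ha
        exact ⟨hA ha, (le_sup_left : B ≤ C) (Subgroup.subset_closure ⟨a, ha, s, hs, rfl⟩)⟩
      · intro l hl
        refine ⟨Subgroup.commutator_le_left K ⊤ hl, ?_⟩
        exact (le_sup_right : M ≤ C)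
          (hLM (Subgroup.commutator_mem_commutator hl (Subgroup.mem_top s)))
    exact fun x hx => (hKT hx).2
  refine Subgroup.commutator_le.mpr ?_
  intro x hx z _
  let U : Subgroup G :=
    { carrier := {z | ⁅x, z⁆ ∈ C}
      one_mem' := by
        have e : ⁅x, (1 : G)⁆ = 1 := by simp only [commutatorElement_def]; group
        show ⁅x, (1 : G)⁆ ∈ C
        rw [e]; exact C.one_mem
      mul_mem' := by
        intro z w hz hw
        show ⁅x, z * w⁆ ∈ C
        have e : ⁅x, z * w⁆ = ⁅x, z⁆ * (z * ⁅x, w⁆ * z⁻¹) := by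
          simp only [commutatorElement_def]; group
        rw [e]
        exact C.mul_mem hz (hconj z _ hw)
      inv_mem' := by
        intro z hz
        show ⁅x, z⁻¹⁆ ∈ C
        have e : ⁅x, z⁻¹⁆ = z⁻¹ * ⁅x, z⁆⁻¹ * z⁻¹⁻¹ := by
          simp only [commutatorElement_def]; group
        rw [e]
        exact hconj z⁻¹ _ (C.inv_mem hz) }
  have hU : (⊤ : Subgroup G) ≤ U := by
    rw [← hS]
    exact (Subgroup.closure_le _).mpr fun s hs => step1 s hs x hx
  exact hU (Subgroup.mem_top z)

private lemma lcs_succ_def (j : ℕ) :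
    Subgroup.lowerCentralSeries (⊤ : Subgroup G) (j + 1) = ⁅Subgroup.lowerCentralSeries (⊤ : Subgroup G) j, (⊤ : Subgroup G)⁆ := rfl

/-- Each quotient of the lower central series of a f.g. group is finitely generated
(in the sense that `γᵢ` is generated by a finite set together with `γᵢ₊₁`). -/
private lemma exists_finset_lcs (S : Finset G) (hS : Subgroup.closure (S : Set G) = ⊤) (i : ℕ) :
    ∃ A : Finset G, (A : Set G) ⊆ (Subgroup.lowerCentralSeries (⊤ : Subgroup G) i : Set G) ∧
      Subgroup.closure (A : Set G) ⊔ Subgroup.lowerCentralSeries (⊤ : Subgroup G) (i + 1) = Subgroup.lowerCentralSeries (⊤ : Subgroup G) i := by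
  classical
  induction i with
  | zero =>
    refine ⟨S, by simp, ?_⟩
    rw [hS]
    simp
  | succ i ih =>
    obtain ⟨A, hA, hKA⟩ := ih
    refine ⟨(A ×ˢ S).image fun p => ⁅p.1, p.2⁆, ?_, ?_⟩
    · intro x hx
      simp only [Finset.coe_image, Set.mem_image, Finset.mem_coe, Finset.mem_product] at hx
      obtain ⟨⟨a, s⟩, ⟨ha, hs⟩, rfl⟩ := hx
      rw [SetLike.mem_coe, lcs_succ_def]
      exact Subgroup.commutator_mem_commutator (hA ha) (Subgroup.mem_top s)
    · have hset : {x | ∃ a ∈ (A : Set G), ∃ s ∈ (S : Set G), ⁅a, s⁆ = x} =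
          (((A ×ˢ S).image fun p => ⁅p.1, p.2⁆ : Finset G) : Set G) := by
        ext x
        simp only [Set.mem_setOf_eq, Finset.coe_image, Set.mem_image, Finset.mem_coe,
          Finset.mem_product]
        constructor
        · rintro ⟨a, ha, s, hs, rfl⟩
          exact ⟨(a, s), ⟨ha, hs⟩, rfl⟩
        · rintro ⟨⟨a, s⟩, ⟨ha, hs⟩, rfl⟩
          exact ⟨a, ha, s, hs, rfl⟩
      refine le_antisymm ?_ ?_
      · refine sup_le ?_ (Subgroup.lowerCentralSeries_antitone _ (Nat.le_succ _))
        refine (Subgroup.closure_le _).mpr ?_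
        intro x hx
        simp only [Finset.coe_image, Set.mem_image, Finset.mem_coe, Finset.mem_product] at hx
        obtain ⟨⟨a, s⟩, ⟨ha, hs⟩, rfl⟩ := hx
        rw [SetLike.mem_coe, lcs_succ_def]
        exact Subgroup.commutator_mem_commutator (hA ha) (Subgroup.mem_top s)
      · rw [lcs_succ_def, ← hset]
        refine key_commutator_le (S : Set G) (A : Set G) hS (Subgroup.lowerCentralSeries (⊤ : Subgroup G) i)
          (Subgroup.lowerCentralSeries (⊤ : Subgroup G) (i + 2)) ?_ ?_ hA ?_
        · rw [← lcs_succ_def]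
          exact Subgroup.lowerCentralSeries_antitone _ (Nat.le_succ _)
        · rw [← lcs_succ_def, ← lcs_succ_def]
        · rw [← lcs_succ_def]
          exact hKA

/-- All terms of the lower central series of a f.g. nilpotent group are finitely generated. -/
private lemma lcs_fg (S : Finset G) (hS : Subgroup.closure (S : Set G) = ⊤) {n : ℕ}
    (hn : Subgroup.lowerCentralSeries (⊤ : Subgroup G) n = ⊥) (i : ℕ) : (Subgroup.lowerCentralSeries (⊤ : Subgroup G) i).FG := by
  have aux : ∀ k j, j + k = n → (Subgroup.lowerCentralSeries (⊤ : Subgroup G) j).FG := by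
    intro k
    induction k with
    | zero =>
      intro j hj
      simp only [Nat.add_zero] at hj
      subst hj
      rw [hn]
      exact ⟨∅, by simp⟩
    | succ k ih =>
      intro j hj
      have h1 : (Subgroup.lowerCentralSeries (⊤ : Subgroup G) (j + 1)).FG := ih (j + 1) (by omega)
      obtain ⟨A, _, hKA⟩ := exists_finset_lcs S hS j
      rw [← hKA]
      exact myfg_sup ⟨A, rfl⟩ h1
  rcases le_total i n with h | h
  · exact aux (n - i) i (by omega)
  · have hbot : Subgroup.lowerCentralSeries (⊤ : Subgroup G) i = ⊥ :=
      le_bot_iff.mp (hn ▸ Subgroup.lowerCentralSeries_antitone _ h)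
    rw [hbot]
    exact ⟨∅, by simp⟩

/-- A subgroup is f.g. if its image under a homomorphism and its intersection with the kernel
are both f.g. -/
private lemma fg_of_map_of_inf_ker {Q : Type*} [Group Q] (f : G →* Q) {H : Subgroup G}
    (h1 : (H.map f).FG) (h2 : (H ⊓ f.ker).FG) : H.FG := by
  classical
  obtain ⟨T, hT⟩ := h1
  obtain ⟨S, hSk⟩ := h2
  have hTlift : ∀ t : T, ∃ g, g ∈ H ∧ f g = (t : Q) := by
    intro t
    have ht : (t : Q) ∈ H.map f := by
      rw [← hT]; exact Subgroup.subset_closure t.2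
    obtain ⟨g, hg, hfg⟩ := ht
    exact ⟨g, hg, hfg⟩
  choose φ hφH hφf using hTlift
  refine (Subgroup.fg_iff H).mpr
    ⟨Set.range φ ∪ (S : Set G), ?_, (Set.finite_range φ).union S.finite_toSet⟩
  have hrange : Set.range φ ⊆ (H : Set G) := by
    rintro _ ⟨t, rfl⟩; exact hφH t
  apply le_antisymm
  · rw [Subgroup.closure_le]
    rintro x (hx | hx)
    · exact hrange hx
    · exact (inf_le_left : H ⊓ f.ker ≤ H) (hSk ▸ Subgroup.subset_closure hx)
  · intro h hh
    have himg : f '' Set.range φ = (T : Set Q) := by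
      ext y
      constructor
      · rintro ⟨_, ⟨t, rfl⟩, rfl⟩
        rw [hφf t]; exact t.2
      · intro hy
        exact ⟨φ ⟨y, hy⟩, ⟨⟨y, hy⟩, rfl⟩, hφf _⟩
    have h1' : f h ∈ (Subgroup.closure (Set.range φ)).map f := by
      rw [MonoidHom.map_closure, himg, hT]
      exact ⟨h, hh, rfl⟩
    obtain ⟨g, hg, hfg⟩ := h1'
    have hgH : g ∈ H := (Subgroup.closure_le H).mpr hrange hg
    have hker : h * g⁻¹ ∈ H ⊓ f.ker := by
      refine Subgroup.mem_inf.mpr ⟨H.mul_mem hh (H.inv_mem hgH), ?_⟩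
      show f (h * g⁻¹) = 1
      rw [map_mul, map_inv, hfg, mul_inv_cancel]
    have heq : h = (h * g⁻¹) * g := by group
    rw [heq]
    exact Subgroup.mul_mem _
      (Subgroup.closure_mono Set.subset_union_right (hSk.symm ▸ hker))
      (Subgroup.closure_mono Set.subset_union_left hg)

/-- Every subgroup of a f.g. abelian group is finitely generated. -/
private lemma subgroup_fg_of_comm {G : Type*} [CommGroup G] [Group.FG G] (H : Subgroup G) :
    H.FG := by
  have h1 : Module.Finite ℤ (Additive G) :=
    Module.Finite.iff_addGroup_fg.mpr inferInstance
  have h2 : IsNoetherian ℤ (Additive G) := inferInstance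
  rw [Subgroup.fg_iff_add_fg]
  rw [← AddSubgroup.toIntSubmodule_toAddSubgroup (Subgroup.toAddSubgroup H),
    ← Submodule.fg_iff_addSubgroup_fg]
  exact IsNoetherian.noetherian _

/-- The lower central series of the commutator subgroup is shifted into that of the group. -/
private lemma lcs_commutator_le (i : ℕ) :
    (Subgroup.lowerCentralSeries (⊤ : Subgroup (commutator G)) i).map (commutator G).subtype ≤
      Subgroup.lowerCentralSeries (⊤ : Subgroup G) (i + 1) := by
  induction i with
  | zero =>
    show Subgroup.map _ ⊤ ≤ _
    rw [← MonoidHom.range_eq_map, Subgroup.range_subtype, Subgroup.top_lowerCentralSeries_one]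
  | succ i ih =>
    show Subgroup.map _ ⁅Subgroup.lowerCentralSeries (⊤ : Subgroup (commutator G)) i, (⊤ : Subgroup (commutator G))⁆ ≤ _
    rw [Subgroup.map_commutator, lcs_succ_def]
    exact Subgroup.commutator_mono ih le_top

end Aux

private lemma subgroup_fg_of_lcs_eq_bot :
    ∀ (n : ℕ) (G : Type*) [Group G] [Group.FG G],
      Subgroup.lowerCentralSeries (⊤ : Subgroup G) n = ⊥ → ∀ H : Subgroup G, H.FG := by
  intro n
  induction n with
  | zero =>
    intro G _ _ hn H
    have hH : H = ⊥ := le_bot_iff.mp (hn ▸ le_top)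
    exact ⟨∅, by simp [hH]⟩
  | succ n ih =>
    intro G _ _ hn H
    obtain ⟨S, hS⟩ : (⊤ : Subgroup G).FG := Group.fg_def.mp inferInstance
    have hNfg : (commutator G).FG := by
      have := lcs_fg S hS hn 1
      rwa [Subgroup.top_lowerCentralSeries_one] at this
    haveI : Group.FG (commutator G) := (Group.fg_iff_subgroup_fg _).mpr hNfg
    have hlcsN : Subgroup.lowerCentralSeries (⊤ : Subgroup (commutator G)) n = ⊥ := by
      have h1 := lcs_commutator_le (G := G) n
      rw [hn, le_bot_iff, Subgroup.map_eq_bot_iff, Subgroup.ker_subtype, le_bot_iff] at h1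
      exact h1
    have hIH : ∀ K : Subgroup (commutator G), K.FG := ih (commutator G) hlcsN
    have hofker : (Abelianization.of : G →* Abelianization G).ker = commutator G := by
      ext x
      show (QuotientGroup.mk x : G ⧸ commutator G) = 1 ↔ x ∈ commutator G
      exact QuotientGroup.eq_one_iff x
    have hsurj : Function.Surjective (Abelianization.of : G →* Abelianization G) := by
      intro x
      exact Quot.inductionOn x fun g => ⟨g, rfl⟩
    haveI : Group.FG (Abelianization G) := Group.fg_of_surjective hsurj
    have h1 : (H.map (Abelianization.of : G →* Abelianization G)).FG := subgroup_fg_of_comm _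
    have h2 : (H ⊓ (Abelianization.of : G →* Abelianization G).ker).FG := by
      rw [hofker, ← Subgroup.subgroupOf_map_subtype]
      exact myfg_map _ (hIH _)
    exact fg_of_map_of_inf_ker Abelianization.of h1 h2

/-- A finitely generated nilpotent group has only countably many subgroups. -/
theorem countable_subgroups_of_fg_nilpotent
    (Γ : Type*) [Group Γ] [Group.IsNilpotent Γ] [Group.FG Γ] :
    Countable (Subgroup Γ) := by
  classical
  obtain ⟨n, hn⟩ := Subgroup.nilpotent_iff_lowerCentralSeries.mp ‹Group.IsNilpotent Γ›
  have hfg : ∀ H : Subgroup Γ, H.FG := subgroup_fg_of_lcs_eq_bot n Γ hn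
  -- Γ is countable
  haveI : Countable Γ := by
    obtain ⟨S, hS⟩ : (⊤ : Subgroup Γ).FG := Group.fg_def.mp inferInstance
    set E : Set Γ := ↑S ∪ (↑S : Set Γ)⁻¹ with hE
    have hEfin : E.Finite := S.finite_toSet.union S.finite_toSet.inv
    haveI : Finite E := hEfin.to_subtype
    have hsurj : Function.Surjective (fun l : List E => (l.map Subtype.val).prod) := by
      intro x
      have hx : x ∈ Submonoid.closure E := by
        have h0 : (Subgroup.closure ((S : Set Γ))).toSubmonoid = Submonoid.closure E :=
          Subgroup.closure_toSubmonoid _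
        have : x ∈ (Subgroup.closure ((S : Set Γ))).toSubmonoid := by
          rw [hS]; trivial
        rwa [h0] at this
      obtain ⟨l, hl, hprod⟩ := Submonoid.exists_list_of_mem_closure hx
      refine ⟨l.pmap (fun a ha => (⟨a, ha⟩ : E)) hl, ?_⟩
      have : (l.pmap (fun a ha => (⟨a, ha⟩ : E)) hl).map Subtype.val = l := by
        simp [List.map_pmap]
      simp only [this]
      exact hprod
    exact hsurj.countable
  let f : Subgroup Γ → Finset Γ := fun H => (hfg H).choose
  have hf : ∀ H, Subgroup.closure ((f H : Finset Γ) : Set Γ) = H := fun H => (hfg H).choose_spec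
  have hinj : Function.Injective f := by
    intro H K h
    rw [← hf H, ← hf K, h]
  exact hinj.countable
end
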